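/- For the straight-line diffusion x_t = (1−t)x_0 + σε with t ∈ [0,1), σ > 0 constant, and x_0 with finite second moments, the probability-flow ODE dx_t/dt = −E[x_0 | x_t] satisfies, for each coordinate i, P(|dx_t^(i)/dt + x_t^(i)/(1−t)| ≥ δ) ≤ σ²/(δ²(1−t)²) for every δ > 0. -/

import Mathlib

open MeasureTheory ProbabilityTheory

open Real Set Filter
open scoped NNReal ENNReal

lemma aux_integral_sq_exp {b : ℝ} (hb : 0 < b) :
    ∫ x : ℝ, x ^ 2 * exp (-b * x ^ 2) = √π / 2 * b ^ (-(3:ℝ)/2) := by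
  have h1 : ∫ x : ℝ, x ^ 2 * exp (-b * x ^ 2)
      = 2 * ∫ x in Ioi (0:ℝ), x ^ 2 * exp (-b * x ^ 2) := by
    rw [← integral_comp_abs (f := fun x => x ^ 2 * exp (-b * x ^ 2))]
    congr 1 with x
    rw [sq_abs]
  have h2 : ∫ x in Ioi (0:ℝ), x ^ 2 * exp (-b * x ^ 2)
      = ∫ x in Ioi (0:ℝ), x ^ (2:ℝ) * exp (-b * x ^ (2:ℝ)) := by
    refine setIntegral_congr_fun measurableSet_Ioi (fun x hx => ?_)
    rw [← Real.rpow_natCast x 2]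
    norm_num
  rw [h1, h2, integral_rpow_mul_exp_neg_mul_rpow two_pos (by norm_num) hb]
  have h3 : ((2:ℝ) + 1) / 2 = 1/2 + 1 := by norm_num
  rw [h3, Real.Gamma_add_one (by norm_num), Real.Gamma_one_half_eq]
  ring_nf

lemma aux_gaussian_sq (m : ℝ) {v : ℝ≥0} (hv : v ≠ 0) :
    ∫ y, (y - m) ^ 2 ∂(gaussianReal m v) = v := by
  have hv' : (0:ℝ) < v := lt_of_le_of_ne v.coe_nonneg (by exact_mod_cast hv.symm)
  rw [gaussianReal_of_var_ne_zero m hv]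
  have hpdf : gaussianPDF m v = fun x => ((gaussianPDFReal m v x).toNNReal : ℝ≥0∞) := rfl
  rw [hpdf, integral_withDensity_eq_integral_smul
    (measurable_gaussianPDFReal m v).real_toNNReal]
  have h1 : ∫ y : ℝ, (gaussianPDFReal m v y).toNNReal • (y - m) ^ 2
      = ∫ y : ℝ, (√(2 * π * v))⁻¹ * ((y - m) ^ 2 * exp (-(2*v:ℝ)⁻¹ * (y - m) ^ 2)) := by
    congr 1 with y
    rw [NNReal.smul_def, smul_eq_mul, Real.coe_toNNReal _ (gaussianPDFReal_nonneg m v y),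
      gaussianPDFReal]
    rw [show -(y - m)^2 / (2 * (v:ℝ)) = -(2*v:ℝ)⁻¹ * (y-m)^2 by field_simp]
    ring
  rw [h1, integral_const_mul,
    integral_sub_right_eq_self (fun y => y ^ 2 * exp (-(2*(v:ℝ))⁻¹ * y ^ 2)) m,
    aux_integral_sq_exp (by positivity)]
  -- algebra
  set s : ℝ := 2 * v with hs
  have hs0 : (0:ℝ) < s := by positivity
  have h2 : (s⁻¹) ^ (-(3:ℝ)/2) = s ^ ((3:ℝ)/2) := by
    rw [← Real.rpow_neg_one s, ← Real.rpow_mul hs0.le]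
    norm_num
  rw [h2]
  have h3 : s ^ ((3:ℝ)/2) = s * √s := by
    rw [show (3:ℝ)/2 = 1 + 1/2 by norm_num, Real.rpow_add hs0, Real.rpow_one,
      Real.sqrt_eq_rpow]
  have h4 : √(2 * π * (v:ℝ)) = √s * √π := by
    rw [show 2 * π * (v:ℝ) = s * π by rw [hs]; ring, Real.sqrt_mul hs0.le]
  rw [h3, h4, show ((v:ℝ)) = s/2 by rw [hs]; ring]
  have hsq : √s * √s = s := Real.mul_self_sqrt hs0.le
  have hπ : (0:ℝ) < √π := Real.sqrt_pos.mpr pi_pos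
  have hs' : (0:ℝ) < √s := Real.sqrt_pos.mpr hs0
  field_simp

lemma aux_eLpNorm_condexp_le {Ω : Type*} {m m0 : MeasurableSpace Ω} (hm : m ≤ m0)
    (μ : Measure Ω) [IsFiniteMeasure μ] {f : Ω → ℝ} (hf : MemLp f 2 μ) :
    eLpNorm (μ[f|m]) 2 μ ≤ eLpNorm f 2 μ := by
  have hfi : Integrable f μ := hf.integrable one_le_two
  have h : μ[f|m] =ᵐ[μ] (condExpL2 ℝ ℝ hm (hf.toLp f) : Lp ℝ 2 μ) := by
    refine (ae_eq_condExp_of_forall_setIntegral_eq hm hfi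
      (fun s _ _ => (integrableOn_condExpL2_of_measure_ne_top hm (measure_ne_top μ s) _))
      (fun s hs _ => ?_) (aestronglyMeasurable_condExpL2 hm _)).symm
    rw [integral_condExpL2_eq hm (hf.toLp f) hs (measure_ne_top μ s)]
    exact setIntegral_congr_ae (hm s hs) ((hf.coeFn_toLp).mono fun x hx _ => hx)
  rw [eLpNorm_congr_ae h, ← eLpNorm_congr_ae hf.coeFn_toLp]
  exact eLpNorm_condExpL2_le hm _


lemma aux_lintegral_sq_eLpNorm {Ω : Type*} {m0 : MeasurableSpace Ω} (μ : Measure Ω)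
    (f : Ω → ℝ) :
    ∫⁻ ω, (‖f ω‖₊ : ℝ≥0∞) ^ 2 ∂μ = eLpNorm f 2 μ ^ (2:ℝ) := by
  rw [eLpNorm_eq_lintegral_rpow_enorm_toReal two_ne_zero ENNReal.ofNat_ne_top,
    ← ENNReal.rpow_mul]
  simp only [ENNReal.toReal_ofNat, one_div]
  rw [inv_mul_cancel₀ (two_ne_zero), ENNReal.rpow_one]
  refine lintegral_congr fun ω => ?_
  rw [← ENNReal.rpow_natCast _ 2]
  norm_num
  rfl

lemma aux_chebyshev {Ω : Type*} {m0 : MeasurableSpace Ω} (μ : Measure Ω)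
    {f : Ω → ℝ} (hf : AEStronglyMeasurable f μ) {δ C : ℝ} (hδ : 0 < δ) (hC : 0 ≤ C)
    (h : ∫⁻ ω, (‖f ω‖₊ : ℝ≥0∞) ^ 2 ∂μ ≤ ENNReal.ofReal C) :
    μ {ω | δ ≤ |f ω|} ≤ ENNReal.ofReal (C / δ ^ 2) := by
  have hsub : {ω | δ ≤ |f ω|} ⊆ {ω | ENNReal.ofReal (δ^2) ≤ (‖f ω‖₊ : ℝ≥0∞)^2} := by
    intro ω hω
    simp only [Set.mem_setOf_eq] at hω ⊢
    rw [← ENNReal.ofReal_coe_nnreal, coe_nnnorm, ← ENNReal.ofReal_pow (norm_nonneg _)]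
    exact ENNReal.ofReal_le_ofReal (by rw [Real.norm_eq_abs]; nlinarith [abs_nonneg (f ω)])
  have h2 := mul_meas_ge_le_lintegral₀ (μ := μ)
    (f := fun ω => (‖f ω‖₊ : ℝ≥0∞)^2) (hf.enorm.pow_const 2) (ENNReal.ofReal (δ^2))
  calc μ {ω | δ ≤ |f ω|} ≤ μ {ω | ENNReal.ofReal (δ^2) ≤ (‖f ω‖₊ : ℝ≥0∞)^2} :=
      measure_mono hsub
  _ ≤ (∫⁻ ω, (‖f ω‖₊ : ℝ≥0∞)^2 ∂μ) / ENNReal.ofReal (δ^2) := by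
      rw [ENNReal.le_div_iff_mul_le (Or.inl (by simp [ENNReal.ofReal_eq_zero]; nlinarith))
        (Or.inl ENNReal.ofReal_ne_top), mul_comm]
      exact h2
  _ ≤ ENNReal.ofReal C / ENNReal.ofReal (δ^2) := ENNReal.div_le_div_right h _
  _ = ENNReal.ofReal (C / δ^2) := by
      rw [ENNReal.ofReal_div_of_pos (by positivity)]

/-- Near-linear trajectory of SLDM: for `x_t = (1−t)x₀ + σε`, the probability-flow
ODE velocity is `dx_t/dt = −E[x₀|x_t]`, and for each coordinate `i` and every
`δ > 0`, `P(|dx_t⁽ⁱ⁾/dt + x_t⁽ⁱ⁾/(1−t)| ≥ δ) ≤ σ²/(δ²(1−t)²)`. -/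
theorem sldm_near_linear_trajectory
    {Ω : Type*} [MeasureSpace Ω] (P : Measure Ω) [IsProbabilityMeasure P]
    {n : ℕ} (x0 xt : Ω → (Fin n → ℝ))
    (hx0 : Measurable x0) (hxt : Measurable xt)
    (hx0L2 : ∀ i, MemLp (fun ω => x0 ω i) 2 P)
    (hxtL2 : ∀ i, MemLp (fun ω => xt ω i) 2 P)
    (t σ : ℝ) (ht0 : 0 ≤ t) (ht1 : t < 1) (hσ : 0 < σ)
    -- forward process: conditionally on x₀, x_t is Gaussian N((1−t)x₀, σ²I)
    (hGauss : ∀ i, ∀ᵐ ω ∂P,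
      condDistrib (fun ω' => xt ω' i) x0 P (x0 ω)
        = gaussianReal ((1 - t) * x0 ω i) ((σ ^ 2).toNNReal))
    -- probability-flow ODE velocity along the trajectory: dx_t/dt = −E[x₀ | x_t]
    (v : Ω → Fin n → ℝ)
    (hv : ∀ i, (fun ω => v ω i)
      =ᵐ[P] fun ω => -(P[fun ω' => x0 ω' i | MeasurableSpace.comap xt inferInstance]) ω) :
    ∀ i, ∀ δ > (0:ℝ),
      P {ω | δ ≤ |v ω i + xt ω i / (1 - t)|}
        ≤ ENNReal.ofReal (σ ^ 2 / (δ ^ 2 * (1 - t) ^ 2)) := by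
  intro i δ hδ
  have h1t : (0:ℝ) < 1 - t := by linarith
  have hm' : MeasurableSpace.comap xt inferInstance ≤
      (inferInstance : MeasurableSpace Ω) := hxt.comap_le
  have hm0 : MeasurableSpace.comap x0 inferInstance ≤
      (inferInstance : MeasurableSpace Ω) := hx0.comap_le
  set W : Ω → ℝ := fun ω => xt ω i / (1 - t) - x0 ω i with hWdef
  have hxtdiv : MemLp (fun ω => xt ω i / (1 - t)) 2 P := by
    have := (hxtL2 i).const_mul (1 - t)⁻¹
    simpa [div_eq_inv_mul] using this
  have hW2 : MemLp W 2 P := hxtdiv.sub (hx0L2 i)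
  have hW1 : Integrable W P := hW2.integrable one_le_two
  have hxtdiv1 : Integrable (fun ω => xt ω i / (1 - t)) P := hxtdiv.integrable one_le_two
  have hx01 : Integrable (fun ω => x0 ω i) P := (hx0L2 i).integrable one_le_two
  set f2 : Ω → ℝ := fun ω => (xt ω i - (1 - t) * x0 ω i) ^ 2 with hf2def
  have hdiff2 : MemLp (fun ω => xt ω i - (1 - t) * x0 ω i) 2 P :=
    (hxtL2 i).sub ((hx0L2 i).const_mul (1 - t))
  have hf2int : Integrable f2 P := hdiff2.integrable_sq
  have hvne : ((σ ^ 2).toNNReal : ℝ≥0) ≠ 0 := by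
    simp only [ne_eq, Real.toNNReal_eq_zero, not_le]
    positivity
  have key : ∫ ω, f2 ω ∂P = σ ^ 2 := by
    set F : (Fin n → ℝ) × ℝ → ℝ := fun p => (p.2 - (1 - t) * p.1 i) ^ 2 with hFdef
    have hFmeas : Measurable F := by
      rw [hFdef]; fun_prop
    have hFint : Integrable F (P.map fun a => (x0 a, xt a i)) := by
      rw [integrable_map_measure hFmeas.aestronglyMeasurable
        (hx0.prodMk (hxt.eval (a := i))).aemeasurable]
      exact hf2int
    have hcond : P[f2 | MeasurableSpace.comap x0 inferInstance] =ᵐ[P]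
        fun ω => ∫ y, F (x0 ω, y) ∂(condDistrib (fun ω' => xt ω' i) x0 P (x0 ω)) :=
      condExp_prod_ae_eq_integral_condDistrib' hx0 (hxt.eval (a := i)).aemeasurable hFint
    have hinner : (fun ω => ∫ y, F (x0 ω, y)
        ∂(condDistrib (fun ω' => xt ω' i) x0 P (x0 ω))) =ᵐ[P] fun _ => σ ^ 2 := by
      filter_upwards [hGauss i] with ω hω
      rw [hω]
      have := aux_gaussian_sq ((1 - t) * x0 ω i) (v := (σ ^ 2).toNNReal) hvne
      rw [Real.coe_toNNReal _ (sq_nonneg σ)] at this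
      simpa [hFdef] using this
    calc ∫ ω, f2 ω ∂P
        = ∫ ω, (P[f2 | MeasurableSpace.comap x0 inferInstance]) ω ∂P :=
          (integral_condExp hm0).symm
    _ = ∫ (_ : Ω), σ ^ 2 ∂P := integral_congr_ae (hcond.trans hinner)
    _ = σ ^ 2 := by simp
  have hWsq_int : ∫ ω, W ω ^ 2 ∂P = σ ^ 2 / (1 - t) ^ 2 := by
    have hWf2 : (fun ω => W ω ^ 2) = fun ω => f2 ω / (1 - t) ^ 2 := by
      funext ω
      rw [hWdef, hf2def]
      field_simp
    rw [hWf2, integral_div, key]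
  have hWlint : ∫⁻ ω, (‖W ω‖₊ : ℝ≥0∞) ^ 2 ∂P = ENNReal.ofReal (σ ^ 2 / (1 - t) ^ 2) := by
    rw [← hWsq_int, ofReal_integral_eq_lintegral_ofReal hW2.integrable_sq
      (Filter.Eventually.of_forall fun ω => sq_nonneg _)]
    refine lintegral_congr fun ω => ?_
    rw [← ENNReal.ofReal_coe_nnreal, coe_nnnorm, ← ENNReal.ofReal_pow (norm_nonneg _),
      Real.norm_eq_abs, sq_abs]
  have hxtdiv_meas : StronglyMeasurable[MeasurableSpace.comap xt inferInstance]
      (fun ω => xt ω i / (1 - t)) := by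
    refine Measurable.stronglyMeasurable ?_
    have hxt' : Measurable[MeasurableSpace.comap xt inferInstance] xt :=
      measurable_iff_comap_le.mpr le_rfl
    exact ((measurable_pi_apply i).div_const (1 - t)).comp hxt'
  have hY : P[W | MeasurableSpace.comap xt inferInstance] =ᵐ[P]
      fun ω => xt ω i / (1 - t)
        - (P[fun ω' => x0 ω' i | MeasurableSpace.comap xt inferInstance]) ω := by
    have h0 : P[W | MeasurableSpace.comap xt inferInstance] =ᵐ[P]
        P[fun ω => xt ω i / (1 - t)|MeasurableSpace.comap xt inferInstance]
          - P[fun ω => x0 ω i|MeasurableSpace.comap xt inferInstance] :=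
      condExp_sub hxtdiv1 hx01 _
    have h1 : P[fun ω => xt ω i / (1 - t)|MeasurableSpace.comap xt inferInstance]
        = fun ω => xt ω i / (1 - t) :=
      condExp_of_stronglyMeasurable hm' hxtdiv_meas hxtdiv1
    filter_upwards [h0] with ω h0ω
    rw [h0ω, Pi.sub_apply, h1]
  have hZ : (fun ω => v ω i + xt ω i / (1 - t)) =ᵐ[P]
      P[W | MeasurableSpace.comap xt inferInstance] := by
    filter_upwards [hv i, hY] with ω hvω hYω
    rw [hvω, hYω]
    ring
  have hZmeas : AEStronglyMeasurable (fun ω => v ω i + xt ω i / (1 - t)) P :=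
    (stronglyMeasurable_condExp.mono hm').aestronglyMeasurable.congr hZ.symm
  have hbound : ∫⁻ ω, (‖v ω i + xt ω i / (1 - t)‖₊ : ℝ≥0∞) ^ 2 ∂P
      ≤ ENNReal.ofReal (σ ^ 2 / (1 - t) ^ 2) := by
    have e1 : ∫⁻ ω, (‖v ω i + xt ω i / (1 - t)‖₊ : ℝ≥0∞) ^ 2 ∂P
        = ∫⁻ ω, (‖(P[W | MeasurableSpace.comap xt inferInstance]) ω‖₊ : ℝ≥0∞) ^ 2 ∂P := by
      refine lintegral_congr_ae ?_
      filter_upwards [hZ] with ω hω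
      rw [hω]
    rw [e1, aux_lintegral_sq_eLpNorm, ← hWlint, aux_lintegral_sq_eLpNorm]
    exact ENNReal.rpow_le_rpow (aux_eLpNorm_condexp_le hm' P hW2) (by norm_num)
  have hres := aux_chebyshev P hZmeas hδ
    (le_of_lt (by positivity : (0:ℝ) < σ ^ 2 / (1 - t) ^ 2)) hbound
  convert hres using 2
  rw [div_div]
  ring_nf
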